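/- arXiv:1412.3871 — 5 statements merged into one kernel-verified Lean document; each statement's English description precedes it below -/
import Mathlib

section
/- If 1 ≤ p < ∞, b ≠ 0, and |a| > |b|^{1/p}, then for every g ∈ L^p(ℝ) the series f = −Σ_{n=1}^∞ (1/a)^n T_{1/b}^n g converges absolutely in L^p(ℝ) and satisfies f − a·T_b f = g. -/
/-!
With `S = T_{1/b}` we have `T_b ∘ S = id` and, by the change of variables `x ↦ b⁻¹ x`,
`‖S f‖_p = |b|^{1/p} ‖f‖_p`. Hence `‖S‖ < |a|`, the series `∑ a⁻ⁿ Sⁿ g` converges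
geometrically, and applying `a • T_b` to its tail shifts the index down by one, which gives
`f - a T_b f = g`.
-/

open MeasureTheory

section NeumannSeries

variable {𝕜 E : Type*} [NontriviallyNormedField 𝕜] [NormedAddCommGroup E] [NormedSpace 𝕜 E]

lemma norm_pow_apply_le (S : E →L[𝕜] E) (g : E) (n : ℕ) :
    ‖(S ^ n) g‖ ≤ ‖S‖ ^ n * ‖g‖ := by
  induction n with
  | zero => simp
  | succ n ih =>
    rw [pow_succ', mul_apply_eq_comp, pow_succ', mul_assoc]
    exact (S.le_opNorm _).trans (by gcongr)

lemma norm_inv_pow_smul_pow_apply_le (S : E →L[𝕜] E) (a : 𝕜) (g : E) (n : ℕ) :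
    ‖a⁻¹ ^ n • (S ^ n) g‖ ≤ (‖S‖ / ‖a‖) ^ n * ‖g‖ := by
  rw [norm_smul, norm_pow, norm_inv, div_pow, div_eq_inv_mul, inv_pow, mul_assoc]
  gcongr
  exact norm_pow_apply_le S g n

lemma summable_norm_inv_pow_smul_pow_apply (S : E →L[𝕜] E) {a : 𝕜} (hS : ‖S‖ < ‖a‖)
    (g : E) :
    Summable fun n : ℕ => ‖a⁻¹ ^ n • (S ^ n) g‖ := by
  have hr : ‖S‖ / ‖a‖ < 1 := (div_lt_one ((norm_nonneg S).trans_lt hS)).mpr hS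
  refine .of_nonneg_of_le (fun _ => norm_nonneg _) (norm_inv_pow_smul_pow_apply_le S a g)
    ((summable_geometric_of_lt_one (by positivity) hr).mul_right _)

lemma sub_smul_apply_neg_tsum_inv_pow_smul_pow_apply (T S : E →L[𝕜] E)
    (hTS : ∀ f, T (S f) = f) {a : 𝕜} (ha : a ≠ 0) {g : E}
    (hsum : Summable fun n : ℕ => a⁻¹ ^ n • (S ^ n) g) :
    (-∑' n : ℕ, a⁻¹ ^ (n + 1) • (S ^ (n + 1)) g) -
        a • T (-∑' n : ℕ, a⁻¹ ^ (n + 1) • (S ^ (n + 1)) g) = g := by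
  have hshift (n : ℕ) :
      a • T (a⁻¹ ^ (n + 1) • (S ^ (n + 1)) g) = a⁻¹ ^ n • (S ^ n) g := by
    rw [pow_succ' S, mul_apply_eq_comp, map_smul, hTS, smul_smul, pow_succ', ← mul_assoc,
      mul_inv_cancel₀ ha, one_mul]
  have hT : a • T (∑' n : ℕ, a⁻¹ ^ (n + 1) • (S ^ (n + 1)) g) =
      ∑' n : ℕ, a⁻¹ ^ n • (S ^ n) g := by
    rw [T.map_tsum ((summable_nat_add_iff 1).mpr hsum), ← tsum_const_smul'' a]
    exact tsum_congr hshift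
  rw [map_neg, smul_neg, hT, hsum.tsum_eq_zero_add]
  simp

end NeumannSeries

section Dilation

open scoped ENNReal

variable {E : Type*} [NormedAddCommGroup E]

lemma eLpNorm_comp_mul_left {f : ℝ → E} (hf : AEStronglyMeasurable f volume) {c : ℝ}
    (hc : c ≠ 0) {p : ℝ≥0∞} (hp : p ≠ ∞) :
    eLpNorm (fun x => f (c * x)) p volume =
      ENNReal.ofReal |c⁻¹| ^ (1 / p).toReal * eLpNorm f p volume := by
  have hmap := Real.map_volume_mul_left hc
  have hf' : AEStronglyMeasurable f (Measure.map (c * ·) volume) := by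
    rw [hmap]
    exact hf.mono_ac Measure.smul_absolutelyContinuous
  rw [← Function.comp_def, ← eLpNorm_map_measure hf' (measurable_const_mul c).aemeasurable, hmap,
    eLpNorm_smul_measure_of_ne_top hp, smul_eq_mul]

lemma Lp.norm_eq_of_ae_eq_comp_mul_left {p : ℝ≥0∞} (hp : p ≠ ∞) {c : ℝ}
    (hc : c ≠ 0) {f h : Lp E p (volume : Measure ℝ)} (hh : h =ᵐ[volume] fun x => f (c * x)) :
    ‖h‖ = |c⁻¹| ^ (1 / p).toReal * ‖f‖ := by
  rw [Lp.norm_def, Lp.norm_def, eLpNorm_congr_ae hh,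
    eLpNorm_comp_mul_left (Lp.aestronglyMeasurable f) hc hp, ENNReal.toReal_mul,
    ← ENNReal.toReal_rpow, ENNReal.toReal_ofReal (abs_nonneg _)]

lemma Lp.eq_of_ae_eq_comp_mul_left_comp_mul_left {p : ℝ≥0∞} {c : ℝ} (hc : c ≠ 0)
    {f h k : Lp E p (volume : Measure ℝ)} (hh : h =ᵐ[volume] fun x => f (c⁻¹ * x))
    (hk : k =ᵐ[volume] fun x => h (c * x)) : k = f := by
  have hqmp : Measure.QuasiMeasurePreserving (c * ·) volume volume :=
    ⟨measurable_const_mul c, by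
      rw [Real.map_volume_mul_left hc]; exact Measure.smul_absolutelyContinuous⟩
  refine Lp.ext (hk.trans ((hh.comp_tendsto hqmp.tendsto_ae).trans ?_))
  filter_upwards with x
  simp [inv_mul_cancel_left₀ hc]

end Dilation

theorem stmt3_general (p a b : ℝ) [Fact (1 ≤ ENNReal.ofReal p)] (hb : b ≠ 0)
    (hab : |a| > |b| ^ (1 / p))
    (T S : Lp ℝ (ENNReal.ofReal p) (volume : Measure ℝ) →L[ℝ]
        Lp ℝ (ENNReal.ofReal p) (volume : Measure ℝ))
    (hT : ∀ f, (T f : ℝ → ℝ) =ᵐ[volume] fun x => f (b * x))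
    (hS : ∀ f, (S f : ℝ → ℝ) =ᵐ[volume] fun x => f (b⁻¹ * x))
    (g : Lp ℝ (ENNReal.ofReal p) (volume : Measure ℝ)) :
    Summable (fun n : ℕ => ‖(1 / a) ^ (n + 1) • (S ^ (n + 1)) g‖) ∧
    (-∑' n : ℕ, (1 / a) ^ (n + 1) • (S ^ (n + 1)) g) -
        a • T (-∑' n : ℕ, (1 / a) ^ (n + 1) • (S ^ (n + 1)) g) = g := by
  have hp : 0 ≤ p := zero_le_one.trans (ENNReal.one_le_ofReal.mp Fact.out)
  have hexp : (1 / ENNReal.ofReal p).toReal = 1 / p := by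
    rw [one_div, one_div, ENNReal.toReal_inv, ENNReal.toReal_ofReal hp]
  have hSnorm : ‖S‖ < ‖a‖ := by
    refine lt_of_le_of_lt (S.opNorm_le_bound (by positivity) fun f => ?_) hab
    rw [Lp.norm_eq_of_ae_eq_comp_mul_left ENNReal.ofReal_ne_top (inv_ne_zero hb) (hS f), inv_inv,
      hexp]
  have hsum := summable_norm_inv_pow_smul_pow_apply S hSnorm g
  simp only [one_div]
  refine ⟨(summable_nat_add_iff 1).mpr hsum, ?_⟩
  exact sub_smul_apply_neg_tsum_inv_pow_smul_pow_apply T S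
    (fun f => Lp.eq_of_ae_eq_comp_mul_left_comp_mul_left hb (hS f) (hT (S f)))
    (norm_pos_iff.mp ((norm_nonneg S).trans_lt hSnorm)) hsum.of_norm

/-- If `1 ≤ p < ∞`, `b ≠ 0`, `|a| > |b|^{1/p}`, `T = T_b` and `S = T_{1/b}` are the
composition operators on `L^p(ℝ)`, then for every `g ∈ L^p(ℝ)` the series
`-∑_{n≥1} (1/a)ⁿ Sⁿ g` converges absolutely in `L^p(ℝ)` and its sum `f`
satisfies `f - a • T f = g`. -/
theorem stmt3 (p a b : ℝ) (hp : 1 ≤ p) [Fact (1 ≤ ENNReal.ofReal p)] (hb : b ≠ 0)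
    (hab : |a| > |b| ^ (1 / p))
    (T S : Lp ℝ (ENNReal.ofReal p) (volume : Measure ℝ) →L[ℝ]
        Lp ℝ (ENNReal.ofReal p) (volume : Measure ℝ))
    (hT : ∀ f, (T f : ℝ → ℝ) =ᵐ[volume] fun x => f (b * x))
    (hS : ∀ f, (S f : ℝ → ℝ) =ᵐ[volume] fun x => f (b⁻¹ * x))
    (g : Lp ℝ (ENNReal.ofReal p) (volume : Measure ℝ)) :
    Summable (fun n : ℕ => ‖(1 / a) ^ (n + 1) • (S ^ (n + 1)) g‖) ∧
    (-∑' n : ℕ, (1 / a) ^ (n + 1) • (S ^ (n + 1)) g) -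
        a • T (-∑' n : ℕ, (1 / a) ^ (n + 1) • (S ^ (n + 1)) g) = g :=
  stmt3_general p a b hb hab T S hT hS g
end

section
/- If 1 ≤ p < ∞, b ≠ 0, and |a| ≠ |b|^{1/p}, then for every g ∈ L^p(ℝ) there exists a unique f ∈ L^p(ℝ) (unique up to almost-everywhere equality) satisfying f(x) − a f(bx) = g(x) for almost all x. -/
open MeasureTheory Module
open scoped ENNReal

/-! The dilation `(D_b φ)(x) = φ(b • x)` is a bounded operator on `L^p(μ)`, `μ` a Haar measure
on a `d`-dimensional real space, with `‖D_b‖ ≤ |b|^(-d/p)` and inverse `D_{b⁻¹}`.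
If `|a| < |b|^(d/p)` the Neumann series inverts `1 - a D_b`; if `|a| > |b|^(d/p)`, write
`1 - a D_b = -(a D_b) (1 - a⁻¹ D_{b⁻¹})` and invert the second factor instead.
Existence and a.e. uniqueness of the solution is the bijectivity of `1 - a D_b`. -/

theorem isUnit_one_sub_of_norm_inv_lt_one {R : Type*} [NormedRing R] [HasSummableGeomSeries R]
    (u : Rˣ) (h : ‖(↑u⁻¹ : R)‖ < 1) : IsUnit (1 - (u : R)) := by
  have : 1 - (u : R) = -u * (1 - ↑u⁻¹) := by
    rw [mul_sub, mul_one, neg_mul, Units.mul_inv]; abel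
  rw [this]
  exact u.isUnit.neg.mul (Units.oneSub _ h).isUnit

namespace MeasureTheory

variable {E : Type*} [NormedAddCommGroup E] [NormedSpace ℝ E] [MeasurableSpace E] [BorelSpace E]
  [FiniteDimensional ℝ E] {μ : Measure E} [μ.IsAddHaarMeasure]
  {F : Type*} [NormedAddCommGroup F] {p : ℝ≥0∞} {c : ℝ}

theorem eLpNorm_comp_smul (hc : c ≠ 0) (f : E → F) :
    eLpNorm (fun x => f (c • x)) p μ
      = ENNReal.ofReal |(c ^ finrank ℝ E)⁻¹| ^ (1 / p).toReal * eLpNorm f p μ := by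
  have hemb : MeasurableEmbedding (c • · : E → E) :=
    (Homeomorph.smul (isUnit_iff_ne_zero.2 hc).unit).measurableEmbedding
  have hk : ENNReal.ofReal |(c ^ finrank ℝ E)⁻¹| ≠ 0 := by
    simpa using pow_pos (abs_pos.2 hc) _
  rw [← smul_eq_mul, ← eLpNorm_smul_measure_of_ne_zero hk,
    ← Measure.map_addHaar_smul μ hc, hemb.eLpNorm_map_measure]
  rfl

theorem MemLp.comp_smul (hc : c ≠ 0) {f : E → F} (hf : MemLp f p μ) :
    MemLp (fun x => f (c • x)) p μ :=
  ⟨hf.1.comp_quasiMeasurePreserving (Measure.quasiMeasurePreserving_smul μ hc), by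
    rw [eLpNorm_comp_smul hc]
    exact ENNReal.mul_lt_top
      (ENNReal.rpow_lt_top_of_nonneg ENNReal.toReal_nonneg ENNReal.ofReal_ne_top) hf.2⟩

variable [NormedSpace ℝ F] [Fact (1 ≤ p)]

local notation "Lᵖ" => Lp F p μ

namespace Lp

variable (μ) in
noncomputable def dilation (c : ℝ) (hc : c ≠ 0) : Lᵖ →L[ℝ] Lᵖ :=
  LinearMap.mkContinuous
    { toFun φ := ((Lp.memLp φ).comp_smul hc).toLp _
      map_add' φ ψ := by
        rw [← MemLp.toLp_add]
        exact MemLp.toLp_congr _ _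
          ((Measure.quasiMeasurePreserving_smul μ hc).ae_eq_comp (Lp.coeFn_add φ ψ))
      map_smul' r φ := by
        rw [RingHom.id_apply, ← MemLp.toLp_const_smul]
        exact MemLp.toLp_congr _ _
          ((Measure.quasiMeasurePreserving_smul μ hc).ae_eq_comp (Lp.coeFn_smul r φ)) }
    (|(c ^ finrank ℝ E)⁻¹| ^ (1 / p).toReal)
    (fun φ => le_of_eq <| by
      rw [LinearMap.coe_mk, AddHom.coe_mk, Lp.norm_toLp, eLpNorm_comp_smul hc,
        ENNReal.toReal_mul, ← ENNReal.toReal_rpow, ENNReal.toReal_ofReal (abs_nonneg _),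
        Lp.norm_def])

variable {d : ℝ} (hc : c ≠ 0) (hd : d ≠ 0)

theorem coeFn_dilation (φ : Lᵖ) : dilation μ c hc φ =ᵐ[μ] fun x => φ (c • x) :=
  ((Lp.memLp φ).comp_smul hc).coeFn_toLp

theorem dilation_toLp {f : E → F} (hf : MemLp f p μ) :
    dilation μ c hc (hf.toLp f) = (hf.comp_smul hc).toLp _ :=
  MemLp.toLp_congr ((Lp.memLp _).comp_smul hc) _
    ((Measure.quasiMeasurePreserving_smul μ hc).ae_eq_comp hf.coeFn_toLp)

theorem norm_dilation_le :
    ‖(dilation μ c hc : Lᵖ →L[ℝ] Lᵖ)‖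
      ≤ |(c ^ finrank ℝ E)⁻¹| ^ (1 / p).toReal :=
  LinearMap.mkContinuous_norm_le _ (Real.rpow_nonneg (abs_nonneg _) _) _

theorem dilation_mul_dilation_eq_one (h : d * c = 1) :
    (dilation μ c hc * dilation μ d hd : Lᵖ →L[ℝ] Lᵖ) = 1 := by
  ext1 φ
  refine Lp.ext ?_
  filter_upwards [coeFn_dilation hc (dilation μ d hd φ),
    (Measure.quasiMeasurePreserving_smul μ hc).ae_eq_comp (coeFn_dilation hd φ)] with x h₁ h₂
  rw [mul_apply_eq_comp, h₁, one_apply_eq_self]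
  simpa only [Function.comp_apply, smul_smul, h, one_smul] using h₂

variable (μ) in
noncomputable def dilationUnits (c : ℝ) (hc : c ≠ 0) : (Lᵖ →L[ℝ] Lᵖ)ˣ where
  val := dilation μ c hc
  inv := dilation μ c⁻¹ (inv_ne_zero hc)
  val_inv := dilation_mul_dilation_eq_one _ _ (inv_mul_cancel₀ hc)
  inv_val := dilation_mul_dilation_eq_one _ _ (mul_inv_cancel₀ hc)

variable {a b : ℝ} (hb : b ≠ 0)

theorem one_sub_smul_dilation_toLp {f : E → F} (hf : MemLp f p μ) :
    (1 - a • dilation μ b hb : Lᵖ →L[ℝ] Lᵖ) (hf.toLp f)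
      = (hf.sub ((hf.comp_smul hb).const_smul a)).toLp (fun x => f x - a • f (b • x)) := by
  rw [sub_apply, one_apply_eq_self, smul_apply, dilation_toLp, ← MemLp.toLp_const_smul,
    ← MemLp.toLp_sub]
  rfl

variable [CompleteSpace F]

theorem isUnit_one_sub_smul_dilation (hab : |a| ≠ |b ^ finrank ℝ E| ^ (1 / p).toReal) :
    IsUnit (1 - a • dilation μ b hb : Lᵖ →L[ℝ] Lᵖ) := by
  have hbr : 0 < |b ^ finrank ℝ E| ^ (1 / p).toReal :=
    Real.rpow_pos_of_pos (abs_pos.2 (pow_ne_zero _ hb)) _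
  rcases hab.lt_or_gt with hlt | hgt
  · refine (Units.oneSub _ ?_).isUnit
    calc ‖(a • dilation μ b hb : Lᵖ →L[ℝ] Lᵖ)‖
        ≤ |a| * |(b ^ finrank ℝ E)⁻¹| ^ (1 / p).toReal := by
          rw [norm_smul, Real.norm_eq_abs]
          exact mul_le_mul_of_nonneg_left (norm_dilation_le hb) (abs_nonneg a)
      _ = |a| / |b ^ finrank ℝ E| ^ (1 / p).toReal := by
          rw [abs_inv, Real.inv_rpow (abs_nonneg _), div_eq_mul_inv |a|]
      _ < 1 := (div_lt_one hbr).2 hlt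
  · have ha : a ≠ 0 := by rintro rfl; exact (hbr.trans hgt).ne' abs_zero
    let u : (Lᵖ →L[ℝ] Lᵖ)ˣ :=
      Units.mk0 a ha • (dilationUnits μ b hb : (Lᵖ →L[ℝ] Lᵖ)ˣ)
    refine isUnit_one_sub_of_norm_inv_lt_one u ?_
    calc ‖(↑u⁻¹ : Lᵖ →L[ℝ] Lᵖ)‖
        = |a|⁻¹ * ‖(dilation μ b⁻¹ (inv_ne_zero hb) : Lᵖ →L[ℝ] Lᵖ)‖ := by
          rw [Units.smul_inv, Units.val_smul, Units.smul_def, norm_smul]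
          simp [dilationUnits]
      _ ≤ |a|⁻¹ * |b ^ finrank ℝ E| ^ (1 / p).toReal := by
          grw [norm_dilation_le, inv_pow, inv_inv]
      _ < 1 := by
          rw [← div_eq_inv_mul]; exact (div_lt_one (abs_pos.2 ha)).2 hgt

end Lp

open Lp in
theorem exists_memLp_ae_sub_smul_comp_smul_eq [CompleteSpace F] {a b : ℝ} (hb : b ≠ 0)
    (hab : |a| ≠ |b ^ finrank ℝ E| ^ (1 / p).toReal) {g : E → F} (hg : MemLp g p μ) :
    ∃ f : E → F, MemLp f p μ ∧ (∀ᵐ x ∂μ, f x - a • f (b • x) = g x) ∧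
      ∀ f' : E → F, MemLp f' p μ → (∀ᵐ x ∂μ, f' x - a • f' (b • x) = g x) →
        f' =ᵐ[μ] f := by
  have hbij := (ContinuousLinearMap.isHomeomorph_of_isUnit
    (isUnit_one_sub_smul_dilation (μ := μ) (F := F) (p := p) hb hab)).bijective
  have solves_iff {f : E → F} (hf : MemLp f p μ) :
      (∀ᵐ x ∂μ, f x - a • f (b • x) = g x) ↔
        (1 - a • dilation μ b hb : Lᵖ →L[ℝ] Lᵖ) (hf.toLp f) = hg.toLp g := by
    rw [one_sub_smul_dilation_toLp, MemLp.toLp_eq_toLp_iff]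
    rfl
  obtain ⟨φ, hφ⟩ := hbij.2 (hg.toLp g)
  rw [← Lp.toLp_coeFn φ (Lp.memLp φ)] at hφ
  refine ⟨φ, Lp.memLp φ, (solves_iff _).2 hφ, fun f' hf' h' => ?_⟩
  exact (MemLp.toLp_eq_toLp_iff hf' (Lp.memLp φ)).1
    (hbij.1 (((solves_iff hf').1 h').trans hφ.symm))

end MeasureTheory

/-- If `1 ≤ p < ∞`, `b ≠ 0`, and `|a| ≠ |b|^{1/p}`, then for every `g ∈ L^p(ℝ)`
there is a solution `f ∈ L^p(ℝ)` of `f x - a f (b x) = g x` (a.e.), unique up to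
almost-everywhere equality. -/
theorem stmt5 (p a b : ℝ) (hp : 1 ≤ p) (hb : b ≠ 0) (hab : |a| ≠ |b| ^ (1 / p))
    (g : ℝ → ℝ) (hg : MemLp g (ENNReal.ofReal p) volume) :
    ∃ f : ℝ → ℝ, MemLp f (ENNReal.ofReal p) volume ∧
      (∀ᵐ x : ℝ ∂volume, f x - a * f (b * x) = g x) ∧
      ∀ f' : ℝ → ℝ, MemLp f' (ENNReal.ofReal p) volume →
        (∀ᵐ x : ℝ ∂volume, f' x - a * f' (b * x) = g x) → f' =ᵐ[volume] f := by
  have : Fact (1 ≤ ENNReal.ofReal p) := ⟨ENNReal.one_le_ofReal.2 hp⟩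
  have hexp : |b ^ finrank ℝ ℝ| ^ (1 / ENNReal.ofReal p).toReal = |b| ^ (1 / p) := by
    rw [finrank_self, pow_one, one_div, ENNReal.toReal_inv,
      ENNReal.toReal_ofReal (by linarith), one_div]
  simpa only [smul_eq_mul] using
    exists_memLp_ae_sub_smul_comp_smul_eq hb (hexp ▸ hab) hg
end

section
/- Let 0 < |a| < 1 and for k ≥ 1 define ĉ_k : [0,1] → ℝ (viewed as 1-periodic functions on ℝ) by ĉ_k(x) = √(1−a²) Σ_{n=0}^∞ a^n √2 cos(2^{n+1} k π x). Then for all k, l ≥ 1 the L²([0,1]) inner product satisfies: ⟨ĉ_k, ĉ_l⟩ = a^j if l = 2^j k or k = 2^j l for some j ≥ 0, and ⟨ĉ_k, ĉ_l⟩ = 0 otherwise. -/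
/-- The Weierstrass cosine function `ĉ_k (x) = √(1-a²) ∑ₙ aⁿ √2 cos (2^{n+1} k π x)`. -/
noncomputable def chatFn (a : ℝ) (k : ℕ) (x : ℝ) : ℝ :=
  Real.sqrt (1 - a ^ 2) *
    ∑' n : ℕ, a ^ n * (Real.sqrt 2 * Real.cos ((2 : ℝ) ^ (n + 1) * (k : ℝ) * Real.pi * x))

/-!
Writing `c_p(x) = √2 cos(2πpx)`, we have `ĉ_k = √(1-a²) ∑ₙ aⁿ c_{2ⁿk}`, and the series converge
uniformly, so `⟨ĉ_k, ĉ_l⟩ = (1-a²) ∑ₙ ∑ₘ aⁿ aᵐ ⟨c_{2ⁿk}, c_{2ᵐl}⟩`. By orthonormality only the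
pairs with `2ⁿk = 2ᵐl` contribute. There are none unless one of `k, l` is `2ʲ` times the other;
if `k = 2ʲl`, they are the pairs `(n, n + j)`, and `(1-a²) ∑ₙ aⁿ aⁿ⁺ʲ = aʲ`.
-/

open Real MeasureTheory

section SwapSumIntegral

variable {ι κ E : Type*} [Countable ι] [Countable κ]
  [NormedAddCommGroup E] [NormedSpace ℝ E] [CompleteSpace E]
  {μ : Measure ℝ} [IsLocallyFiniteMeasure μ] {a b : ℝ}

theorem intervalIntegral_tsum_of_norm_le {f : ι → ℝ → E} {u : ι → ℝ}
    (hf : ∀ i, Continuous (f i)) (hu : Summable u) (hfu : ∀ i x, ‖f i x‖ ≤ u i) :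
    ∫ x in a..b, ∑' i, f i x ∂μ = ∑' i, ∫ x in a..b, f i x ∂μ :=
  (intervalIntegral.hasSum_integral_of_dominated_convergence (fun i _ => u i)
    (fun i => (hf i).aestronglyMeasurable) (fun i => ae_of_all _ fun x _ => hfu i x)
    (ae_of_all _ fun _ _ => hu) intervalIntegrable_const
    (ae_of_all _ fun x _ => (hu.of_norm_bounded (hfu · x)).hasSum)).tsum_eq.symm

theorem intervalIntegral_tsum_mul_tsum_of_norm_le {f : ι → ℝ → ℝ} {g : κ → ℝ → ℝ}
    {u : ι → ℝ} {v : κ → ℝ} (hf : ∀ i, Continuous (f i)) (hg : ∀ j, Continuous (g j))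
    (hu : Summable u) (hv : Summable v)
    (hfu : ∀ i x, ‖f i x‖ ≤ u i) (hgv : ∀ j x, ‖g j x‖ ≤ v j) :
    ∫ x in a..b, (∑' i, f i x) * (∑' j, g j x) ∂μ =
      ∑' i, ∑' j, ∫ x in a..b, f i x * g j x ∂μ := by
  have hg_sum : ∀ x, ‖∑' j, g j x‖ ≤ ∑' j, v j := fun x =>
    tsum_of_norm_bounded hv.hasSum (hgv · x)
  simp_rw [← tsum_mul_right]
  rw [intervalIntegral_tsum_of_norm_le (f := fun i x => f i x * ∑' j, g j x)
    (u := fun i => u i * ∑' j, v j)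
    (fun i => (hf i).mul (continuous_tsum hg hv hgv)) (hu.mul_right _)
    (fun i x => by
      rw [norm_mul]
      exact mul_le_mul (hfu i x) (hg_sum x) (norm_nonneg _) ((norm_nonneg _).trans (hfu i x)))]
  refine tsum_congr fun i => ?_
  simp_rw [← tsum_mul_left]
  refine intervalIntegral_tsum_of_norm_le (u := fun j => u i * v j)
    (fun j => (hf i).mul (hg j)) (hv.mul_left _) fun j x => ?_
  rw [norm_mul]
  exact mul_le_mul (hfu i x) (hgv j x) (norm_nonneg _) ((norm_nonneg _).trans (hfu i x))

end SwapSumIntegral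

noncomputable def cosBasis (p : ℕ) (x : ℝ) : ℝ := √2 * cos (2 * π * p * x)

theorem continuous_cosBasis (p : ℕ) : Continuous (cosBasis p) := by
  unfold cosBasis; fun_prop

theorem abs_cosBasis_le (p : ℕ) (x : ℝ) : |cosBasis p x| ≤ √2 := by
  rw [cosBasis, abs_mul, abs_of_nonneg (sqrt_nonneg 2)]
  exact mul_le_of_le_one_right (sqrt_nonneg 2) (abs_cos_le_one _)

theorem integral_cos_two_pi_int_mul {N : ℤ} (hN : N ≠ 0) :
    ∫ x in (0 : ℝ)..1, cos (2 * π * N * x) = 0 := by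
  have hc : 2 * π * N ≠ 0 := by simp [hN, pi_ne_zero]
  rw [intervalIntegral.integral_comp_mul_left (fun y => cos y) hc, integral_cos, mul_one,
    mul_zero, sin_zero, sub_zero, smul_eq_mul, mul_eq_zero]
  right
  simpa [mul_assoc, mul_comm π] using sin_int_mul_pi (2 * N)

theorem integral_cosBasis_mul_cosBasis {p : ℕ} (hp : p ≠ 0) (q : ℕ) :
    ∫ x in (0 : ℝ)..1, cosBasis p x * cosBasis q x = if p = q then 1 else 0 := by
  have hprod : ∀ x, cosBasis p x * cosBasis q x =
      cos (2 * π * ((p - q : ℤ) : ℝ) * x) + cos (2 * π * ((p + q : ℤ) : ℝ) * x) := by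
    intro x
    rw [cosBasis, cosBasis, mul_mul_mul_comm, mul_self_sqrt zero_le_two, ← mul_assoc,
      two_mul_cos_mul_cos]
    push_cast
    ring_nf
  simp_rw [hprod]
  rw [intervalIntegral.integral_add (Continuous.intervalIntegrable (by fun_prop) _ _)
      (Continuous.intervalIntegrable (by fun_prop) _ _),
    integral_cos_two_pi_int_mul (by omega : (p + q : ℤ) ≠ 0), add_zero]
  split_ifs with hpq
  · simp [hpq]
  · exact integral_cos_two_pi_int_mul (by omega)

theorem chatFn_eq_tsum_cosBasis (a : ℝ) (k : ℕ) (x : ℝ) :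
    chatFn a k x = √(1 - a ^ 2) * ∑' n : ℕ, a ^ n * cosBasis (2 ^ n * k) x := by
  simp only [chatFn, cosBasis]
  congr 1
  refine tsum_congr fun n => ?_
  push_cast
  ring_nf

theorem norm_pow_mul_cosBasis_le (a : ℝ) (p n : ℕ) (x : ℝ) :
    ‖a ^ n * cosBasis p x‖ ≤ |a| ^ n * √2 := by
  rw [norm_mul, norm_pow, norm_eq_abs, norm_eq_abs]
  exact mul_le_mul_of_nonneg_left (abs_cosBasis_le p x) (by positivity)

theorem integral_chatFn_mul_chatFn {a : ℝ} (ha : |a| < 1) {k : ℕ} (hk : k ≠ 0) (l : ℕ) :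
    ∫ x in (0 : ℝ)..1, chatFn a k x * chatFn a l x =
      (1 - a ^ 2) * ∑' n : ℕ, ∑' m : ℕ, a ^ n * a ^ m * if 2 ^ n * k = 2 ^ m * l then 1 else 0 := by
  have hsq : 0 ≤ 1 - a ^ 2 := sub_nonneg.2 (sq_le_one_iff_abs_le_one a |>.2 ha.le)
  have hgeo : Summable fun n : ℕ => |a| ^ n * √2 :=
    (summable_geometric_of_lt_one (abs_nonneg a) ha).mul_right _
  simp_rw [chatFn_eq_tsum_cosBasis, mul_mul_mul_comm (√(1 - a ^ 2)) _ (√(1 - a ^ 2)),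
    mul_self_sqrt hsq]
  rw [intervalIntegral.integral_const_mul, intervalIntegral_tsum_mul_tsum_of_norm_le
    (f := fun n x => a ^ n * cosBasis (2 ^ n * k) x)
    (g := fun m x => a ^ m * cosBasis (2 ^ m * l) x)
    (fun n => continuous_const.mul (continuous_cosBasis _))
    (fun m => continuous_const.mul (continuous_cosBasis _)) hgeo hgeo
    (fun n => norm_pow_mul_cosBasis_le a _ n) (fun m => norm_pow_mul_cosBasis_le a _ m)]
  congr 1
  refine tsum_congr fun n => tsum_congr fun m => ?_
  simp_rw [mul_mul_mul_comm (a ^ n) _ (a ^ m)]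
  rw [intervalIntegral.integral_const_mul,
    integral_cosBasis_mul_cosBasis (mul_ne_zero (by positivity) hk)]

theorem pow_two_mul_eq_pow_two_mul_iff {l : ℕ} (hl : l ≠ 0) (j n m : ℕ) :
    2 ^ n * (2 ^ j * l) = 2 ^ m * l ↔ m = n + j := by
  rw [← mul_assoc, ← pow_add, Nat.mul_left_inj hl, Nat.pow_right_injective le_rfl |>.eq_iff,
    eq_comm]

theorem exists_eq_pow_two_mul_of_pow_two_mul_eq {k l n m : ℕ} (h : 2 ^ n * k = 2 ^ m * l) :
    ∃ j, l = 2 ^ j * k ∨ k = 2 ^ j * l := by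
  rcases le_total m n with hmn | hnm
  · refine ⟨n - m, Or.inl (Nat.eq_of_mul_eq_mul_left (pow_pos two_pos m) ?_)⟩
    rw [← h, ← mul_assoc, ← pow_add, Nat.add_sub_cancel' hmn]
  · refine ⟨m - n, Or.inr (Nat.eq_of_mul_eq_mul_left (pow_pos two_pos n) ?_)⟩
    rw [h, ← mul_assoc, ← pow_add, Nat.add_sub_cancel' hnm]

theorem one_sub_sq_mul_tsum_pow_mul_pow_add {a : ℝ} (ha : |a| < 1) (j : ℕ) :
    (1 - a ^ 2) * ∑' n : ℕ, a ^ n * a ^ (n + j) = a ^ j := by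
  have ha2 : a ^ 2 < 1 := sq_lt_one_iff_abs_lt_one a |>.2 ha
  have hterm : ∀ n : ℕ, a ^ n * a ^ (n + j) = a ^ j * (a ^ 2) ^ n := fun n => by ring
  simp_rw [hterm]
  rw [tsum_mul_left, tsum_geometric_of_lt_one (sq_nonneg a) ha2]
  field_simp [(sub_pos.2 ha2).ne']

theorem integral_chatFn_pow_two_mul_mul_chatFn {a : ℝ} (ha : |a| < 1) {l : ℕ} (hl : l ≠ 0)
    (j : ℕ) : ∫ x in (0 : ℝ)..1, chatFn a (2 ^ j * l) x * chatFn a l x = a ^ j := by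
  rw [integral_chatFn_mul_chatFn ha (by positivity), ← one_sub_sq_mul_tsum_pow_mul_pow_add ha j]
  congr 1
  refine tsum_congr fun n => ?_
  rw [tsum_eq_single (n + j) fun m hm => by simp [pow_two_mul_eq_pow_two_mul_iff hl, hm]]
  simp [pow_two_mul_eq_pow_two_mul_iff hl]

theorem integral_chatFn_mul_chatFn_eq_zero {a : ℝ} (ha : |a| < 1) {k l : ℕ} (hk : k ≠ 0)
    (h : ¬∃ j, l = 2 ^ j * k ∨ k = 2 ^ j * l) :
    ∫ x in (0 : ℝ)..1, chatFn a k x * chatFn a l x = 0 := by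
  have hne : ∀ n m : ℕ, 2 ^ n * k ≠ 2 ^ m * l := fun n m hnm =>
    h (exists_eq_pow_two_mul_of_pow_two_mul_eq hnm)
  simp [integral_chatFn_mul_chatFn ha hk, hne]

theorem stmt14_general (a : ℝ) (ha : |a| < 1) :
    ∀ k l : ℕ, 1 ≤ k → 1 ≤ l →
      (∀ j : ℕ, (l = 2 ^ j * k ∨ k = 2 ^ j * l) →
        (∫ x in (0 : ℝ)..1, chatFn a k x * chatFn a l x) = a ^ j) ∧
      ((¬ ∃ j : ℕ, l = 2 ^ j * k ∨ k = 2 ^ j * l) →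
        (∫ x in (0 : ℝ)..1, chatFn a k x * chatFn a l x) = 0) := by
  intro k l hk hl
  refine ⟨fun j hj => ?_, integral_chatFn_mul_chatFn_eq_zero ha (by omega)⟩
  rcases hj with rfl | rfl
  · simp_rw [mul_comm (chatFn a k _)]
    exact integral_chatFn_pow_two_mul_mul_chatFn ha (by omega) j
  · exact integral_chatFn_pow_two_mul_mul_chatFn ha (by omega) j

/-- For `0 < |a| < 1` and `k, l ≥ 1`, the `L²([0,1])` inner products of the
functions `ĉ_k` satisfy `⟨ĉ_k, ĉ_l⟩ = aʲ` if `l = 2ʲ k` or `k = 2ʲ l` for some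
`j ≥ 0`, and `⟨ĉ_k, ĉ_l⟩ = 0` otherwise. -/
theorem stmt14 (a : ℝ) (ha0 : a ≠ 0) (ha : |a| < 1) :
    ∀ k l : ℕ, 1 ≤ k → 1 ≤ l →
      (∀ j : ℕ, (l = 2 ^ j * k ∨ k = 2 ^ j * l) →
        (∫ x in (0 : ℝ)..1, chatFn a k x * chatFn a l x) = a ^ j) ∧
      ((¬ ∃ j : ℕ, l = 2 ^ j * k ∨ k = 2 ^ j * l) →
        (∫ x in (0 : ℝ)..1, chatFn a k x * chatFn a l x) = 0) :=
  stmt14_general a ha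
end

section
/- Let {c_k}_{k≥1} be an orthonormal family in a Hilbert space H, 0 < |a| < 1, and let c̃_k be the orthonormal family defined by c̃_k = ĉ_k for k odd and c̃_k = √(1−a²) ĉ_k − a c_{k/2} for k even, where ĉ_k = √(1−a²) Σ_{n=0}^∞ a^n c_{2^n k}. If h = Σ_{n=1}^∞ α_n c_n with (α_n) square-summable, then ⟨h, c̃_n⟩ = √(1−a²) Σ_{m=0}^∞ a^m α_{n 2^m} for n odd, and ⟨h, c̃_n⟩ = −a α_{n/2} + (1−a²) Σ_{m=0}^∞ a^m α_{n 2^m} for n even. -/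
open scoped RealInnerProductSpace

/-- `ĉ_k = √(1-a²) ∑ₙ aⁿ c_{2ⁿ k}`. -/
noncomputable def chatVec {H : Type*} [NormedAddCommGroup H] [InnerProductSpace ℝ H]
    (c : ℕ → H) (a : ℝ) (k : ℕ) : H :=
  Real.sqrt (1 - a ^ 2) • ∑' n : ℕ, a ^ n • c (2 ^ n * k)

/-- `c̃_k = ĉ_k` for odd `k`, and `c̃_k = √(1-a²) ĉ_k - a c_{k/2}` for even `k`. -/
noncomputable def ctilVec {H : Type*} [NormedAddCommGroup H] [InnerProductSpace ℝ H]
    (c : ℕ → H) (a : ℝ) (k : ℕ) : H :=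
  if Odd k then chatVec c a k
  else Real.sqrt (1 - a ^ 2) • chatVec c a k - a • c (k / 2)

/-! Both formulas come from pairing `h` with the series defining `ĉₙ` term by term: the pairing is
continuous, so it commutes with the (convergent, since `|a| < 1`) series, and `⟪h, c_k⟫ = α_k`
by orthonormality. -/

section Orthonormal

variable {𝕜 E ι : Type*} [RCLike 𝕜] [NormedAddCommGroup E] [InnerProductSpace 𝕜 E] {v : ι → E}

theorem inner_tsum_right {g : ι → E} (hg : Summable g) (x : E) :
    inner 𝕜 x (∑' i, g i) = ∑' i, inner 𝕜 x (g i) :=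
  (innerSL 𝕜 x).map_tsum hg

theorem Orthonormal.inner_tsum_smul (hv : Orthonormal 𝕜 v) {f : ι → 𝕜}
    (hf : Summable fun i => f i • v i) (j : ι) :
    inner 𝕜 (v j) (∑' i, f i • v i) = f j := by
  rw [inner_tsum_right hf, tsum_eq_single j]
  · simp [inner_smul_right, hv.1 j]
  · intro i hij
    simp [inner_smul_right, hv.inner_eq_zero (Ne.symm hij)]

theorem Orthonormal.summable_smul [CompleteSpace E] (hv : Orthonormal 𝕜 v) {f : ι → 𝕜}
    (hf : Summable fun i => ‖f i‖ ^ 2) : Summable fun i => f i • v i := by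
  simpa using (hv.orthogonalFamily.summable_iff_norm_sq_summable f).2 hf

theorem Orthonormal.summable_pow_smul [CompleteSpace E] {v : ℕ → E} (hv : Orthonormal 𝕜 v)
    {a : 𝕜} (ha : ‖a‖ < 1) : Summable fun n => a ^ n • v n := by
  refine hv.summable_smul <|
    (summable_geometric_of_lt_one (by positivity) (pow_lt_one₀ (norm_nonneg a) ha two_ne_zero)).congr
      fun n => by rw [norm_pow]; ring

end Orthonormal

section Weierstrass

variable {H : Type*} [NormedAddCommGroup H] [InnerProductSpace ℝ H] [CompleteSpace H]
  {c : ℕ → H} {a : ℝ} {k : ℕ}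

theorem inner_chatVec (hc : Orthonormal ℝ c) (ha : |a| < 1) (hk : k ≠ 0) (x : H) :
    ⟪x, chatVec c a k⟫ = √(1 - a ^ 2) * ∑' m, a ^ m * ⟪x, c (k * 2 ^ m)⟫ := by
  have hinj : Function.Injective fun m : ℕ => 2 ^ m * k :=
    (mul_left_injective₀ hk).comp (Nat.pow_right_injective le_rfl)
  have hsum : Summable fun m => a ^ m • c (2 ^ m * k) := (hc.comp _ hinj).summable_pow_smul ha
  rw [chatVec, real_inner_smul_right, inner_tsum_right hsum]
  simp only [real_inner_smul_right, mul_comm k]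

theorem inner_ctilVec_of_odd (hc : Orthonormal ℝ c) (ha : |a| < 1) (hk : Odd k) (x : H) :
    ⟪x, ctilVec c a k⟫ = √(1 - a ^ 2) * ∑' m, a ^ m * ⟪x, c (k * 2 ^ m)⟫ := by
  rw [ctilVec, if_pos hk, inner_chatVec hc ha hk.pos.ne']

theorem inner_ctilVec_of_even (hc : Orthonormal ℝ c) (ha : |a| < 1) (hk : Even k) (hk0 : k ≠ 0)
    (x : H) :
    ⟪x, ctilVec c a k⟫ =
      -a * ⟪x, c (k / 2)⟫ + (1 - a ^ 2) * ∑' m, a ^ m * ⟪x, c (k * 2 ^ m)⟫ := by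
  have hsq : √(1 - a ^ 2) * √(1 - a ^ 2) = 1 - a ^ 2 :=
    Real.mul_self_sqrt (by nlinarith [abs_nonneg a, sq_abs a])
  rw [ctilVec, if_neg (Nat.not_odd_iff_even.2 hk), inner_sub_right, real_inner_smul_right,
    real_inner_smul_right, inner_chatVec hc ha hk0, ← mul_assoc, hsq]
  ring

end Weierstrass

theorem stmt17_general {H : Type*} [NormedAddCommGroup H] [InnerProductSpace ℝ H]
    [CompleteSpace H] (c : ℕ → H) (hc : Orthonormal ℝ c)
    (a : ℝ) (ha : |a| < 1)
    (α : ℕ → ℝ) (hα : Summable fun n => (α n) ^ 2)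
    (h : H) (hh : h = ∑' n : ℕ, α (n + 1) • c (n + 1)) :
    ∀ n : ℕ, 1 ≤ n →
      (Odd n → ⟪h, ctilVec c a n⟫ =
        Real.sqrt (1 - a ^ 2) * ∑' m : ℕ, a ^ m * α (n * 2 ^ m)) ∧
      (Even n → ⟪h, ctilVec c a n⟫ =
        -a * α (n / 2) + (1 - a ^ 2) * ∑' m : ℕ, a ^ m * α (n * 2 ^ m)) := by
  have hc' : Orthonormal ℝ fun n => c (n + 1) := hc.comp _ (add_left_injective 1)
  have hsum : Summable fun n => α (n + 1) • c (n + 1) :=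
    hc'.summable_smul <| (hα.comp_injective (add_left_injective 1)).congr fun n => by simp
  have hcoef : ∀ k, 1 ≤ k → ⟪h, c k⟫ = α k := by
    intro k hk
    obtain ⟨j, rfl⟩ := Nat.exists_eq_add_of_le' hk
    rw [hh, real_inner_comm]
    exact hc'.inner_tsum_smul hsum j
  have hseries : ∀ n, 1 ≤ n →
      ∑' m, a ^ m * ⟪h, c (n * 2 ^ m)⟫ = ∑' m, a ^ m * α (n * 2 ^ m) := fun n hn =>
    tsum_congr fun m => by rw [hcoef _ (Nat.mul_pos hn (Nat.two_pow_pos m))]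
  intro n hn
  refine ⟨fun hodd => ?_, fun heven => ?_⟩
  · rw [inner_ctilVec_of_odd hc ha hodd, hseries n hn]
  · have hhalf : 1 ≤ n / 2 := by obtain ⟨m, rfl⟩ := heven; omega
    rw [inner_ctilVec_of_even hc ha heven (by omega), hcoef _ hhalf, hseries n hn]

/-- Weierstrass Fourier coefficients: if `h = ∑_{n≥1} αₙ cₙ` with `(αₙ)` square
summable, then `⟨h, c̃ₙ⟩ = √(1-a²) ∑ₘ aᵐ α_{n 2ᵐ}` for odd `n`, and
`⟨h, c̃ₙ⟩ = -a α_{n/2} + (1-a²) ∑ₘ aᵐ α_{n 2ᵐ}` for even `n`. -/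
theorem stmt17 {H : Type*} [NormedAddCommGroup H] [InnerProductSpace ℝ H]
    [CompleteSpace H] (c : ℕ → H) (hc : Orthonormal ℝ c)
    (a : ℝ) (ha0 : a ≠ 0) (ha : |a| < 1)
    (α : ℕ → ℝ) (hα : Summable fun n => (α n) ^ 2)
    (h : H) (hh : h = ∑' n : ℕ, α (n + 1) • c (n + 1)) :
    ∀ n : ℕ, 1 ≤ n →
      (Odd n → ⟪h, ctilVec c a n⟫ =
        Real.sqrt (1 - a ^ 2) * ∑' m : ℕ, a ^ m * α (n * 2 ^ m)) ∧
      (Even n → ⟪h, ctilVec c a n⟫ =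
        -a * α (n / 2) + (1 - a ^ 2) * ∑' m : ℕ, a ^ m * α (n * 2 ^ m)) :=
  stmt17_general c hc a ha α hα h hh
end

section
/- Let 1 ≤ p < ∞, b > 0, and |a| ≠ |b|^{1/p}. If g ∈ L^p(ℝ) vanishes almost everywhere on (−∞, 0), then the unique solution f ∈ L^p(ℝ) of f(x) − a f(bx) = g(x) also vanishes almost everywhere on (−∞, 0). -/
/-!
On `(-∞, 0)` the equation is homogeneous, because `x ↦ b x` preserves that half-line: the
restriction `F = 1_{(-∞,0)} f` satisfies `F x = a F (b x)` almost everywhere. The dilation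
`x ↦ b x` multiplies `L^p` norms by `b^{-1/p}`, so `‖F‖_p = |a| b^{-1/p} ‖F‖_p`; as that factor
is not `1` and `‖F‖_p < ∞`, `‖F‖_p = 0`.
-/

open MeasureTheory
open scoped ENNReal

variable {E : Type*}

theorem eLpNorm_comp_mul_left_s18 [NormedAddCommGroup E] {b : ℝ} (hb : b ≠ 0) (F : ℝ → E)
    (q : ℝ≥0∞) :
    eLpNorm (fun x => F (b * x)) q volume
      = ENNReal.ofReal |b⁻¹| ^ (1 / q).toReal * eLpNorm F q volume := by
  rw [← Function.comp_def, ← (measurableEmbedding_mulLeft₀ hb).eLpNorm_map_measure,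
    Real.map_volume_mul_left hb, eLpNorm_smul_measure_of_ne_zero (by simpa using hb)]
  rfl

theorem MemLp.ae_eq_zero_of_ae_eq_smul_comp_mul_left [NormedAddCommGroup E] [NormedSpace ℝ E]
    {p a b : ℝ} (hp : 0 < p) (hb : b ≠ 0) (hab : |a| ≠ |b| ^ (1 / p)) {F : ℝ → E}
    (hF : MemLp F (ENNReal.ofReal p) volume) (h : F =ᵐ[volume] fun x => a • F (b * x)) :
    F =ᵐ[volume] 0 := by
  set q := ENNReal.ofReal p
  have hscale : eLpNorm F q volume
      = ‖a‖ₑ * ENNReal.ofReal |b⁻¹| ^ (1 / q).toReal * eLpNorm F q volume :=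
    calc eLpNorm F q volume = eLpNorm (a • fun x => F (b * x)) q volume := eLpNorm_congr_ae h
      _ = _ := by rw [eLpNorm_const_smul, eLpNorm_comp_mul_left_s18 hb, mul_assoc]
  have hconst : ‖a‖ₑ * ENNReal.ofReal |b⁻¹| ^ (1 / q).toReal ≠ 1 := by
    have hexp : (1 / q).toReal = 1 / p := by
      rw [one_div, ← ENNReal.ofReal_inv_of_pos hp, ENNReal.toReal_ofReal (by positivity), one_div]
    rw [hexp, ENNReal.ofReal_rpow_of_nonneg (abs_nonneg _) (by positivity),
      Real.enorm_eq_ofReal_abs, ← ENNReal.ofReal_mul (abs_nonneg a), ne_eq,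
      ENNReal.ofReal_eq_one, abs_inv, Real.inv_rpow (abs_nonneg b), mul_inv_eq_one₀ (by positivity)]
    exact hab
  have hnorm : eLpNorm F q volume = 0 := by
    by_contra hne
    exact hconst ((ENNReal.mul_eq_right hne hF.eLpNorm_ne_top).1 hscale.symm)
  exact (eLpNorm_eq_zero_iff hF.1 (by simpa [q] using hp)).1 hnorm

theorem indicator_Iio_ae_eq_smul_comp_mul_left [AddCommGroup E] [Module ℝ E] {μ : Measure ℝ}
    {a b : ℝ} (hb : 0 < b) {f g : ℝ → E} (hgz : ∀ᵐ x ∂μ, x < 0 → g x = 0)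
    (heq : ∀ᵐ x ∂μ, f x - a • f (b * x) = g x) :
    (Set.Iio 0).indicator f =ᵐ[μ] fun x => a • (Set.Iio 0).indicator f (b * x) := by
  filter_upwards [heq, hgz] with x hfx hgx
  rcases lt_or_ge x 0 with hx | hx
  · have hbx : b * x < 0 := mul_neg_of_pos_of_neg hb hx
    rw [Set.indicator_of_mem (Set.mem_Iio.2 hx), Set.indicator_of_mem (Set.mem_Iio.2 hbx),
      ← sub_eq_zero, hfx, hgx hx]
  · have hbx : 0 ≤ b * x := mul_nonneg hb.le hx
    rw [Set.indicator_of_notMem (Set.notMem_Iio.2 hx),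
      Set.indicator_of_notMem (Set.notMem_Iio.2 hbx), smul_zero]

theorem stmt18_general (p a b : ℝ) (hp : 1 ≤ p) (hb : 0 < b) (hab : |a| ≠ |b| ^ (1 / p))
    (g f : ℝ → ℝ)
    (hgz : ∀ᵐ x : ℝ ∂volume, x < 0 → g x = 0)
    (hf : MemLp f (ENNReal.ofReal p) volume)
    (heq : ∀ᵐ x : ℝ ∂volume, f x - a * f (b * x) = g x) :
    ∀ᵐ x : ℝ ∂volume, x < 0 → f x = 0 := by
  have hF : (Set.Iio 0).indicator f =ᵐ[volume] 0 :=
    MemLp.ae_eq_zero_of_ae_eq_smul_comp_mul_left (by linarith) hb.ne' hab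
      (hf.indicator measurableSet_Iio) (indicator_Iio_ae_eq_smul_comp_mul_left hb hgz heq)
  filter_upwards [hF] with x hx hxneg
  rwa [Set.indicator_of_mem (Set.mem_Iio.2 hxneg)] at hx

/-- Let `1 ≤ p < ∞`, `b > 0`, `|a| ≠ |b|^{1/p}`. If `g ∈ L^p(ℝ)` vanishes a.e. on
`(-∞, 0)`, then any (hence the unique) solution `f ∈ L^p(ℝ)` of
`f x - a f (b x) = g x` also vanishes a.e. on `(-∞, 0)`. -/
theorem stmt18 (p a b : ℝ) (hp : 1 ≤ p) (hb : 0 < b) (hab : |a| ≠ |b| ^ (1 / p))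
    (g f : ℝ → ℝ) (hg : MemLp g (ENNReal.ofReal p) volume)
    (hgz : ∀ᵐ x : ℝ ∂volume, x < 0 → g x = 0)
    (hf : MemLp f (ENNReal.ofReal p) volume)
    (heq : ∀ᵐ x : ℝ ∂volume, f x - a * f (b * x) = g x) :
    ∀ᵐ x : ℝ ∂volume, x < 0 → f x = 0 :=
  stmt18_general p a b hp hb hab g f hgz hf heq
end
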